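/- For every Banach space X, K₁(X) ≤ G(X) ≤ R(X*), where K₁(X) = sup over weak* null (f_n) in B_{X*} of inf over convex block subsequences of α, G(X) is the analogous quantity with limsup of norms, and R(X*) = sup over sequences in B_{X*} of inf over convex block subsequences (z_n) of ca((z_n)). -/

import Mathlib

open Filter Topology Metric Set NormedSpace

noncomputable section

/-- `y` is a convex block subsequence of `x`. -/
def IsConvexBlock {E : Type*} [AddCommGroup E] [Module ℝ E] (x y : ℕ → E) : Prop :=
  ∃ k : ℕ → ℕ, k 0 = 0 ∧ StrictMono k ∧
    ∀ n, y n ∈ convexHull ℝ (x '' Set.Ico (k n) (k (n + 1)))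

variable (X : Type*) [NormedAddCommGroup X] [NormedSpace ℝ X]

/-- A set is weakly compact if its image in the weak topology is compact. -/
def WeaklyCompact (K : Set X) : Prop := IsCompact (toWeakSpace ℝ X '' K)

/-- A sequence is weakly null. -/
def WeaklyNull (x : ℕ → X) : Prop :=
  ∀ f : X →L[ℝ] ℝ, Tendsto (fun n => f (x n)) atTop (𝓝 0)

/-- A sequence in the dual is weak* null. -/
def WeakStarNull (f : ℕ → X →L[ℝ] ℝ) : Prop :=
  ∀ x : X, Tendsto (fun n => f n x) atTop (𝓝 0)

/-- A sequence in the dual is weak* Cauchy. -/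
def WeakStarCauchy (f : ℕ → X →L[ℝ] ℝ) : Prop :=
  ∀ x : X, ∃ L : ℝ, Tendsto (fun n => f n x) atTop (𝓝 L)

variable {X}

/-- α((f_n)) = sup over weakly compact K ⊆ B_X of limsup_n sup_{x ∈ K} |⟨f_n, x⟩|. -/
def alphaQ (f : ℕ → X →L[ℝ] ℝ) : ℝ :=
  sSup { r | ∃ K : Set X, K ⊆ closedBall 0 1 ∧ WeaklyCompact X K ∧
    r = limsup (fun n => sSup ((fun x => |f n x|) '' K)) atTop }

/-- β((f_n)) = sup over weakly null (x_n) in B_X of limsup_n |⟨f_n, x_n⟩|. -/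
def betaQ (f : ℕ → X →L[ℝ] ℝ) : ℝ :=
  sSup { r | ∃ x : ℕ → X, (∀ n, x n ∈ closedBall (0 : X) 1) ∧ WeaklyNull X x ∧
    r = limsup (fun n => |f n (x n)|) atTop }

/-- ca_{ρ*}((f_n)): measures Mackey-Cauchyness. -/
def caRho (f : ℕ → X →L[ℝ] ℝ) : ℝ :=
  sSup { r | ∃ K : Set X, K ⊆ closedBall 0 1 ∧ WeaklyCompact X K ∧
    r = ⨅ n : ℕ, sSup { t | ∃ k ≥ n, ∃ l ≥ n, ∃ x ∈ K, t = |(f k - f l) x| } }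

/-- ca((z_n)) = inf_n sup_{k,l ≥ n} ‖z_k - z_l‖. -/
def caSeq {E : Type*} [NormedAddCommGroup E] (z : ℕ → E) : ℝ :=
  ⨅ n : ℕ, sSup { r | ∃ k ≥ n, ∃ l ≥ n, r = ‖z k - z l‖ }

variable (X)

def K1 : ℝ :=
  sSup { r | ∃ f : ℕ → X →L[ℝ] ℝ, (∀ n, ‖f n‖ ≤ 1) ∧ WeakStarNull X f ∧
    r = sInf { s | ∃ g, IsConvexBlock f g ∧ s = alphaQ g } }

def K2 : ℝ :=
  sSup { r | ∃ f : ℕ → X →L[ℝ] ℝ, (∀ n, ‖f n‖ ≤ 1) ∧ WeakStarNull X f ∧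
    r = sInf { s | ∃ g, IsConvexBlock f g ∧ s = betaQ g } }

def K3 : ℝ :=
  sSup { r | ∃ f : ℕ → X →L[ℝ] ℝ, (∀ n, ‖f n‖ ≤ 1) ∧ WeakStarCauchy X f ∧
    r = sInf { s | ∃ g, IsConvexBlock f g ∧ s = caRho g } }

/-- Property (K). -/
def PropertyK : Prop :=
  ∀ f : ℕ → X →L[ℝ] ℝ, WeakStarNull X f → ∃ g, IsConvexBlock f g ∧ alphaQ g = 0

/-- The Grothendieck property: every weak* null sequence in the dual is weakly null. -/
def Grothendieck : Prop :=
  ∀ f : ℕ → X →L[ℝ] ℝ, WeakStarNull X f →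
    ∀ Φ : (X →L[ℝ] ℝ) →L[ℝ] ℝ, Tendsto (fun n => Φ (f n)) atTop (𝓝 0)

def GQ : ℝ :=
  sSup { r | ∃ f : ℕ → X →L[ℝ] ℝ, (∀ n, ‖f n‖ ≤ 1) ∧ WeakStarNull X f ∧
    r = sInf { s | ∃ g, IsConvexBlock f g ∧ s = limsup (fun n => ‖g n‖) atTop } }

def RQ : ℝ :=
  sSup { r | ∃ x : ℕ → X, (∀ n, x n ∈ closedBall (0 : X) 1) ∧
    r = sInf { s | ∃ z, IsConvexBlock x z ∧ s = caSeq z } }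

/-- weak* cluster points in the bidual of a sequence in the bidual. -/
def WStarClusterPts (u : ℕ → (X →L[ℝ] ℝ) →L[ℝ] ℝ) : Set ((X →L[ℝ] ℝ) →L[ℝ] ℝ) :=
  { z | MapClusterPt (StrongDual.toWeakDual (𝕜 := ℝ) z) atTop
      (fun n => StrongDual.toWeakDual (𝕜 := ℝ) (u n)) }

def wckQ (A : Set X) : ℝ :=
  sSup { r | ∃ x : ℕ → X, (∀ n, x n ∈ A) ∧
    r = sInf { s | ∃ z ∈ WStarClusterPts X (fun n => inclusionInDoubleDual ℝ X (x n)),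
      ∃ v : X, s = ‖z - inclusionInDoubleDual ℝ X v‖ } }

/-!
Both inequalities are proved block by block: for a convex block subsequence `g` of a weak* null
sequence in `B_{X*}`, one has `α(g) ≤ limsup ‖g n‖` because weakly compact subsets of `B_X` lie
in `B_X`, and `limsup ‖g n‖ ≤ ca(g)` because `‖g k‖ = sup_{‖x‖ ≤ 1} lim_l |(g k - g l) x|`.
Convex blocks of a sequence in `B_{X*}` stay in `B_{X*}`, and those of a weak* null sequence stay
weak* null, so these bounds pass to the infima over convex blocks and then to the suprema.
-/

section ConvexBlock

variable {E F : Type*}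

theorem IsConvexBlock.refl [AddCommGroup E] [Module ℝ E] (x : ℕ → E) : IsConvexBlock x x :=
  ⟨id, rfl, strictMono_id, fun n => subset_convexHull ℝ _ ⟨n, ⟨le_rfl, n.lt_succ_self⟩, rfl⟩⟩

theorem IsConvexBlock.map [AddCommGroup E] [Module ℝ E] [AddCommGroup F] [Module ℝ F]
    {x y : ℕ → E} (h : IsConvexBlock x y) (L : E →ₗ[ℝ] F) :
    IsConvexBlock (fun n => L (x n)) (fun n => L (y n)) := by
  obtain ⟨k, hk0, hk, hmem⟩ := h
  refine ⟨k, hk0, hk, fun n => ?_⟩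
  have hL := mem_image_of_mem L (hmem n)
  rwa [L.image_convexHull, ← image_comp] at hL

theorem IsConvexBlock.mem_of_forall_ge [AddCommGroup E] [Module ℝ E] {x y : ℕ → E}
    (h : IsConvexBlock x y) {s : Set E} (hs : Convex ℝ s) {N : ℕ} (hx : ∀ m ≥ N, x m ∈ s) :
    ∀ n ≥ N, y n ∈ s := by
  obtain ⟨k, -, hk, hmem⟩ := h
  intro n hn
  refine convexHull_min ?_ hs (hmem n)
  rintro _ ⟨m, hm, rfl⟩
  exact hx m (hn.trans (hk.le_apply.trans hm.1))

variable [NormedAddCommGroup E] [NormedSpace ℝ E] {x y : ℕ → E}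

theorem IsConvexBlock.norm_le (h : IsConvexBlock x y) {C : ℝ} (hx : ∀ n, ‖x n‖ ≤ C) (n : ℕ) :
    ‖y n‖ ≤ C := by
  have hball := h.mem_of_forall_ge (convex_closedBall 0 C) (N := 0)
    (fun m _ => mem_closedBall_zero_iff.mpr (hx m)) n n.zero_le
  exact mem_closedBall_zero_iff.mp hball

theorem IsConvexBlock.tendsto (h : IsConvexBlock x y) {a : E}
    (hx : Tendsto x atTop (𝓝 a)) : Tendsto y atTop (𝓝 a) := by
  rw [nhds_basis_closedBall.tendsto_right_iff] at hx ⊢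
  intro ε hε
  obtain ⟨N, hN⟩ := eventually_atTop.mp (hx ε hε)
  exact eventually_atTop.mpr ⟨N, h.mem_of_forall_ge (convex_closedBall a ε) hN⟩

end ConvexBlock

theorem IsConvexBlock.weakStarNull {Y : Type*} [NormedAddCommGroup Y] [NormedSpace ℝ Y]
    {f g : ℕ → Y →L[ℝ] ℝ} (h : IsConvexBlock f g) (hf : WeakStarNull Y f) :
    WeakStarNull Y g := fun x =>
  (h.map (ContinuousLinearMap.apply ℝ ℝ x).toLinearMap).tendsto (hf x)

section NormEstimates

variable {E : Type*} [NormedAddCommGroup E] {C : ℝ}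

theorem limsup_norm_nonneg {z : ℕ → E} (hz : ∀ n, ‖z n‖ ≤ C) :
    0 ≤ limsup (fun n => ‖z n‖) atTop :=
  le_limsup_of_frequently_le (Frequently.of_forall fun n => norm_nonneg (z n))
    (isBoundedUnder_of ⟨C, hz⟩)

theorem limsup_norm_le {z : ℕ → E} (hz : ∀ n, ‖z n‖ ≤ C) :
    limsup (fun n => ‖z n‖) atTop ≤ C :=
  limsup_le_of_le (isCoboundedUnder_le_of_le atTop fun n => norm_nonneg (z n))
    (Eventually.of_forall hz)

theorem mem_upperBounds_norm_sub_tail {z : ℕ → E} (hz : ∀ n, ‖z n‖ ≤ C) (n : ℕ) :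
    C + C ∈ upperBounds { r | ∃ k ≥ n, ∃ l ≥ n, r = ‖z k - z l‖ } := by
  rintro r ⟨k, -, l, -, rfl⟩
  exact (norm_sub_le _ _).trans (add_le_add (hz k) (hz l))

theorem sSup_norm_sub_tail_nonneg (z : ℕ → E) (n : ℕ) :
    0 ≤ sSup { r | ∃ k ≥ n, ∃ l ≥ n, r = ‖z k - z l‖ } :=
  Real.sSup_nonneg (by rintro r ⟨k, -, l, -, rfl⟩; exact norm_nonneg _)

theorem caSeq_nonneg (z : ℕ → E) : 0 ≤ caSeq z :=
  le_ciInf (sSup_norm_sub_tail_nonneg z)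

theorem caSeq_le {z : ℕ → E} (hz : ∀ n, ‖z n‖ ≤ C) : caSeq z ≤ C + C := by
  refine (ciInf_le ⟨0, ?_⟩ 0).trans (csSup_le ⟨_, 0, le_rfl, 0, le_rfl, rfl⟩ ?_)
  · rintro _ ⟨n, rfl⟩
    exact sSup_norm_sub_tail_nonneg z n
  · exact mem_upperBounds_norm_sub_tail hz 0

end NormEstimates

section Dual

variable {Y : Type*} [NormedAddCommGroup Y] [NormedSpace ℝ Y] {C : ℝ}

theorem alphaQ_nonneg (g : ℕ → Y →L[ℝ] ℝ) : 0 ≤ alphaQ g := by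
  refine Real.sSup_nonneg' ⟨0, ⟨∅, empty_subset _, ?_, ?_⟩, le_rfl⟩
  · simp [WeaklyCompact]
  · simp [Real.sSup_empty]

theorem alphaQ_le_limsup_norm {g : ℕ → Y →L[ℝ] ℝ} (hg : ∀ n, ‖g n‖ ≤ C) :
    alphaQ g ≤ limsup (fun n => ‖g n‖) atTop := by
  refine Real.sSup_le ?_ (limsup_norm_nonneg hg)
  rintro r ⟨K, hK, -, rfl⟩
  have hsup : ∀ n, sSup ((fun x => |g n x|) '' K) ≤ ‖g n‖ := fun n =>
    Real.sSup_le (by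
      rintro _ ⟨x, hx, rfl⟩
      exact (g n).le_of_opNorm_le le_rfl x |>.trans
        (mul_le_of_le_one_right (norm_nonneg _) (mem_closedBall_zero_iff.mp (hK hx))))
      (norm_nonneg _)
  exact limsup_le_limsup (Eventually.of_forall hsup)
    (isCoboundedUnder_le_of_le atTop fun n => Real.sSup_nonneg (by
      rintro _ ⟨x, -, rfl⟩
      exact abs_nonneg _))
    (isBoundedUnder_of ⟨C, hg⟩)

/-- Since `g` is weak* null, `|g k x| = lim_l |(g k - g l) x|`. -/
theorem norm_le_sSup_norm_sub_tail {g : ℕ → Y →L[ℝ] ℝ} (hg : ∀ n, ‖g n‖ ≤ C)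
    (hnull : WeakStarNull Y g) {n k : ℕ} (hk : n ≤ k) :
    ‖g k‖ ≤ sSup { r | ∃ k ≥ n, ∃ l ≥ n, r = ‖g k - g l‖ } := by
  refine (g k).opNorm_le_bound (sSup_norm_sub_tail_nonneg g n) fun x => ?_
  have hlim : Tendsto (fun l => ‖(g k - g l) x‖) atTop (𝓝 ‖g k x‖) := by
    simpa using ((hnull x).const_sub (g k x)).norm
  refine le_of_tendsto hlim (eventually_atTop.mpr ⟨n, fun l hl => ?_⟩)
  exact (g k - g l).le_opNorm x |>.trans <| mul_le_mul_of_nonneg_right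
    (le_csSup ⟨_, mem_upperBounds_norm_sub_tail hg n⟩ ⟨k, hk, l, hl, rfl⟩) (norm_nonneg x)

theorem limsup_norm_le_caSeq {g : ℕ → Y →L[ℝ] ℝ} (hg : ∀ n, ‖g n‖ ≤ C)
    (hnull : WeakStarNull Y g) : limsup (fun n => ‖g n‖) atTop ≤ caSeq g :=
  le_ciInf fun n => limsup_le_of_le (isCoboundedUnder_le_of_le atTop fun k => norm_nonneg (g k))
    (eventually_atTop.mpr ⟨n, fun _ hk => norm_le_sSup_norm_sub_tail hg hnull hk⟩)

end Dual

section ConvexBlockInf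

variable {E : Type*} [AddCommGroup E] [Module ℝ E]

def convexBlockInf (φ : (ℕ → E) → ℝ) (x : ℕ → E) : ℝ :=
  sInf { s | ∃ y, IsConvexBlock x y ∧ s = φ y }

variable {φ ψ : (ℕ → E) → ℝ} {x y : ℕ → E}

theorem IsConvexBlock.convexBlockInf_le (hy : IsConvexBlock x y)
    (hφ : ∀ z, IsConvexBlock x z → 0 ≤ φ z) : convexBlockInf φ x ≤ φ y :=
  csInf_le ⟨0, by rintro _ ⟨z, hz, rfl⟩; exact hφ z hz⟩ ⟨y, hy, rfl⟩

theorem convexBlockInf_mono (hφ : ∀ y, IsConvexBlock x y → 0 ≤ φ y)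
    (hφψ : ∀ y, IsConvexBlock x y → φ y ≤ ψ y) :
    convexBlockInf φ x ≤ convexBlockInf ψ x := by
  refine le_csInf ⟨_, x, .refl x, rfl⟩ ?_
  rintro _ ⟨y, hy, rfl⟩
  exact (hy.convexBlockInf_le hφ).trans (hφψ y hy)

end ConvexBlockInf

theorem le_GQ {X : Type*} [NormedAddCommGroup X] [NormedSpace ℝ X] {f : ℕ → X →L[ℝ] ℝ}
    (hf : ∀ n, ‖f n‖ ≤ 1) (hnull : WeakStarNull X f) :
    convexBlockInf (fun g => limsup (fun n => ‖g n‖) atTop) f ≤ GQ X := by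
  unfold GQ
  refine le_csSup ⟨1, ?_⟩ ⟨f, hf, hnull, rfl⟩
  rintro _ ⟨f', hf', -, rfl⟩
  exact ((IsConvexBlock.refl f').convexBlockInf_le fun g hg =>
    limsup_norm_nonneg (hg.norm_le hf')).trans (limsup_norm_le hf')

theorem le_RQ {Y : Type*} [NormedAddCommGroup Y] [NormedSpace ℝ Y] {x : ℕ → Y}
    (hx : ∀ n, ‖x n‖ ≤ 1) : convexBlockInf caSeq x ≤ RQ Y := by
  unfold RQ
  refine le_csSup ⟨1 + 1, ?_⟩ ⟨x, fun n => mem_closedBall_zero_iff.mpr (hx n), rfl⟩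
  rintro _ ⟨x', hx', rfl⟩
  exact ((IsConvexBlock.refl x').convexBlockInf_le fun z _ => caSeq_nonneg z).trans
    (caSeq_le fun n => mem_closedBall_zero_iff.mp (hx' n))

theorem stmt18_general {X : Type*} [NormedAddCommGroup X] [NormedSpace ℝ X] :
    K1 X ≤ GQ X ∧ GQ X ≤ RQ (X →L[ℝ] ℝ) := by
  have hzero : WeakStarNull X 0 := fun x => by simp
  constructor
  · refine csSup_le ⟨_, 0, fun _ => by simp, hzero, rfl⟩ ?_
    rintro _ ⟨f, hf, hnull, rfl⟩
    refine (convexBlockInf_mono (fun g _ => alphaQ_nonneg g) fun g hg => ?_).trans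
      (le_GQ hf hnull)
    exact alphaQ_le_limsup_norm (hg.norm_le hf)
  · refine csSup_le ⟨_, 0, fun _ => by simp, hzero, rfl⟩ ?_
    rintro _ ⟨f, hf, hnull, rfl⟩
    refine (convexBlockInf_mono (fun g hg => limsup_norm_nonneg (hg.norm_le hf))
      fun g hg => ?_).trans (le_RQ hf)
    exact limsup_norm_le_caSeq (hg.norm_le hf) (hg.weakStarNull hnull)

theorem stmt18 {X : Type*} [NormedAddCommGroup X] [NormedSpace ℝ X] [CompleteSpace X] :
    K1 X ≤ GQ X ∧ GQ X ≤ RQ (X →L[ℝ] ℝ) :=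
  stmt18_general
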